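/- For any sublattice S of a nondegenerate even lattice L, every element g of the stable orthogonal group Õ(S) extends (by the identity on S⊥) to an element of the stable orthogonal group Õ(L). In particular Õ(S) embeds as a subgroup of Õ(L). -/

import Mathlib

/-!
Since `S` is nondegenerate, `ℚ^n = S_ℚ ⊕ S_ℚ^⊥`. Writing `x ∈ L∨` as `v + w` accordingly, `g`
fixes `w`, and `v` pairs integrally with `S`, so `g x - x = g v - v ∈ S ⊆ L`. Taking `x ∈ L ⊆ L∨`
gives `g L ⊆ L`. An isometry of a nondegenerate form is bijective, and `x = g⁻¹ l` pairs integrally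
with `L` because `g L ⊆ L`; hence `x ∈ L∨` and `x = g x - (g x - x) ∈ L`.
-/

open Matrix

/-- The subgroup of vectors of `ℚ^ι` with integral coordinates (the lattice `L` inside `L ⊗ ℚ`). -/
def intVecs (ι : Type*) [Fintype ι] : AddSubgroup (ι → ℚ) where
  carrier := {x | ∀ i, ∃ z : ℤ, x i = z}
  add_mem' := by
    intro a b ha hb i
    obtain ⟨z, hz⟩ := ha i
    obtain ⟨w, hw⟩ := hb i
    exact ⟨z + w, by simp [Pi.add_apply, hz, hw]⟩
  zero_mem' := fun i => ⟨0, by simp⟩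
  neg_mem' := by
    intro a ha i
    obtain ⟨z, hz⟩ := ha i
    exact ⟨-z, by simp [Pi.neg_apply, hz]⟩

/-- The dual lattice `L∨ ⊆ L ⊗ ℚ` of the lattice with Gram matrix `B`. -/
def dualLat {ι : Type*} [Fintype ι] (B : Matrix ι ι ℤ) : AddSubgroup (ι → ℚ) where
  carrier := {x | ∀ v : ι → ℤ, ∃ z : ℤ,
    x ⬝ᵥ (B.map (Int.cast : ℤ → ℚ)).mulVec (fun i => (v i : ℚ)) = z}
  add_mem' := by
    intro a b ha hb v
    obtain ⟨z, hz⟩ := ha v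
    obtain ⟨w, hw⟩ := hb v
    exact ⟨z + w, by rw [add_dotProduct, hz, hw]; push_cast; ring⟩
  zero_mem' := fun v => ⟨0, by simp⟩
  neg_mem' := by
    intro a ha v
    obtain ⟨z, hz⟩ := ha v
    exact ⟨-z, by rw [neg_dotProduct, hz]; push_cast; ring⟩

section

variable {ι : Type*}

lemma intCast_mem_intVecs [Fintype ι] (l : ι → ℤ) : (fun i => (l i : ℚ)) ∈ intVecs ι :=
  fun i => ⟨l i, rfl⟩

lemma mem_intVecs_iff [Fintype ι] {x : ι → ℚ} :
    x ∈ intVecs ι ↔ ∃ l : ι → ℤ, (fun i => (l i : ℚ)) = x :=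
  ⟨fun hx => ⟨fun i => (hx i).choose, funext fun i => (hx i).choose_spec.symm⟩,
    fun ⟨l, hl⟩ => hl ▸ intCast_mem_intVecs l⟩

lemma intCast_dotProduct_map_mulVec [Fintype ι] (B : Matrix ι ι ℤ) (v w : ι → ℤ) :
    (fun i => (v i : ℚ)) ⬝ᵥ (B.map (Int.cast : ℤ → ℚ)) *ᵥ (fun i => (w i : ℚ))
      = ((v ⬝ᵥ B *ᵥ w : ℤ) : ℚ) := by
  simp [dotProduct, mulVec]

lemma intCast_mem_dualLat [Fintype ι] (B : Matrix ι ι ℤ) (l : ι → ℤ) :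
    (fun i => (l i : ℚ)) ∈ dualLat B :=
  fun v => ⟨l ⬝ᵥ B *ᵥ v, intCast_dotProduct_map_mulVec B l v⟩

lemma Matrix.IsSymm.dotProduct_mulVec_comm [Fintype ι] {R : Type*} [CommSemiring R]
    {A : Matrix ι ι R} (hA : A.IsSymm) (x y : ι → R) : x ⬝ᵥ A *ᵥ y = y ⬝ᵥ A *ᵥ x := by
  rw [dotProduct_mulVec, ← mulVec_transpose, hA, dotProduct_comm]

lemma injective_of_preserves_dotProduct_mulVec [Fintype ι] [DecidableEq ι] {K : Type*} [Field K]
    {A : Matrix ι ι K} (hA : A.det ≠ 0) {g : (ι → K) →ₗ[K] (ι → K)}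
    (hg : ∀ x y, g x ⬝ᵥ A *ᵥ g y = x ⬝ᵥ A *ᵥ y) : Function.Injective g := by
  refine (injective_iff_map_eq_zero g).mpr fun x hx => ?_
  refine (nondegenerate_of_det_ne_zero hA).eq_zero_of_ortho fun y => ?_
  rw [← hg, hx, zero_dotProduct]

abbrev ratSpan (S : Submodule ℤ (ι → ℤ)) : Submodule ℚ (ι → ℚ) :=
  Submodule.span ℚ ((fun v : ι → ℤ => fun i => (v i : ℚ)) '' (S : Set (ι → ℤ)))

lemma exists_smul_eq_intCast_of_mem_ratSpan {S : Submodule ℤ (ι → ℤ)} {x : ι → ℚ}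
    (hx : x ∈ ratSpan S) :
    ∃ d : ℤ, d ≠ 0 ∧ ∃ t ∈ S, (d : ℚ) • x = fun i => (t i : ℚ) := by
  induction hx using Submodule.span_induction with
  | mem y hy =>
    obtain ⟨s, hs, rfl⟩ := hy
    exact ⟨1, one_ne_zero, s, hs, one_smul ℚ _⟩
  | zero => exact ⟨1, one_ne_zero, 0, S.zero_mem, by simp [Pi.zero_def]⟩
  | add y z _ _ ihy ihz =>
    obtain ⟨d, hd, t, ht, hdt⟩ := ihy
    obtain ⟨e, he, u, hu, heu⟩ := ihz
    refine ⟨d * e, mul_ne_zero hd he, e • t + d • u, add_mem (S.smul_mem e ht) (S.smul_mem d hu),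
      funext fun i => ?_⟩
    have h1 := congrFun hdt i
    have h2 := congrFun heu i
    simp only [Pi.add_apply, Pi.smul_apply, smul_eq_mul] at h1 h2 ⊢
    push_cast
    linear_combination (e : ℚ) * h1 + (d : ℚ) * h2
  | smul q y _ ihy =>
    obtain ⟨d, hd, t, ht, hdt⟩ := ihy
    refine ⟨q.den * d, by positivity, q.num • t, S.smul_mem q.num ht, funext fun i => ?_⟩
    have h1 := congrFun hdt i
    simp only [Pi.smul_apply, smul_eq_mul] at h1 ⊢
    push_cast
    rw [← Rat.mul_den_eq_num, ← h1]
    ring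

end

section

variable {ι : Type*} [Fintype ι] {B : Matrix ι ι ℤ} {g : (ι → ℚ) →ₗ[ℚ] (ι → ℚ)}

lemma map_intCast_mem_intVecs (hg : ∀ x ∈ dualLat B, g x - x ∈ intVecs ι) (l : ι → ℤ) :
    g (fun i => (l i : ℚ)) ∈ intVecs ι := by
  simpa using add_mem (hg _ (intCast_mem_dualLat B l)) (intCast_mem_intVecs l)

lemma exists_intCast_preimage (hsurj : Function.Surjective g)
    (hiso : ∀ x y, g x ⬝ᵥ (B.map (Int.cast : ℤ → ℚ)) *ᵥ g y = x ⬝ᵥ (B.map (Int.cast : ℤ → ℚ)) *ᵥ y)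
    (hg : ∀ x ∈ dualLat B, g x - x ∈ intVecs ι) (l : ι → ℤ) :
    ∃ l' : ι → ℤ, g (fun i => (l' i : ℚ)) = fun i => (l i : ℚ) := by
  obtain ⟨x, hx⟩ := hsurj fun i => (l i : ℚ)
  have hx_dual : x ∈ dualLat B := fun v => by
    obtain ⟨m, hm⟩ := mem_intVecs_iff.mp (map_intCast_mem_intVecs hg v)
    rw [← hiso, hx, ← hm, intCast_dotProduct_map_mulVec]
    exact ⟨_, rfl⟩
  have hx_int : x ∈ intVecs ι := by
    simpa [hx] using sub_mem (intCast_mem_intVecs l) (hg x hx_dual)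
  obtain ⟨l', rfl⟩ := mem_intVecs_iff.mp hx_int
  exact ⟨l', hx⟩

variable [DecidableEq ι] {S : Submodule ℤ (ι → ℤ)}

lemma disjoint_ratSpan_orthogonal (hB : B.IsSymm)
    (hS : ∀ s ∈ S, (∀ t ∈ S, s ⬝ᵥ B *ᵥ t = 0) → s = 0) :
    Disjoint (ratSpan S) ((toBilin' (B.map (Int.cast : ℤ → ℚ))).orthogonal (ratSpan S)) := by
  refine Submodule.disjoint_def.mpr fun x hx hxperp => ?_
  obtain ⟨d, hd, t, ht, hdt⟩ := exists_smul_eq_intCast_of_mem_ratSpan hx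
  have ht0 : t = 0 := hS t ht fun s hs => by
    have hsx : toBilin' (B.map (Int.cast : ℤ → ℚ)) (fun i => (s i : ℚ)) ((d : ℚ) • x) = 0 := by
      rw [map_smul, hxperp _ (Submodule.subset_span ⟨s, hs, rfl⟩), smul_zero]
    rw [hdt, toBilin'_apply', intCast_dotProduct_map_mulVec] at hsx
    rw [hB.dotProduct_mulVec_comm]
    exact_mod_cast hsx
  have : (d : ℚ) • x = 0 := by rw [hdt, ht0]; rfl
  exact (smul_eq_zero.mp this).resolve_left (Int.cast_ne_zero.mpr hd)

theorem sub_mem_intVecs_of_mem_dualLat (hB : B.IsSymm)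
    (hS : ∀ s ∈ S, (∀ t ∈ S, s ⬝ᵥ B *ᵥ t = 0) → s = 0)
    (hg_perp : ∀ x : ι → ℚ,
      (∀ s ∈ S, x ⬝ᵥ (B.map (Int.cast : ℤ → ℚ)) *ᵥ (fun i => (s i : ℚ)) = 0) → g x = x)
    (hg_stab : ∀ x ∈ ratSpan S,
      (∀ s ∈ S, ∃ z : ℤ, x ⬝ᵥ (B.map (Int.cast : ℤ → ℚ)) *ᵥ (fun i => (s i : ℚ)) = z) →
      ∃ a ∈ S, g x - x = fun i => (a i : ℚ))
    {x : ι → ℚ} (hx : x ∈ dualLat B) : g x - x ∈ intVecs ι := by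
  set F := toBilin' (B.map (Int.cast : ℤ → ℚ))
  have hBq := hB.map (Int.cast : ℤ → ℚ)
  have hF : F.IsRefl := fun x y h => by
    rwa [toBilin'_apply', hBq.dotProduct_mulVec_comm, ← toBilin'_apply']
  have hcompl : IsCompl (ratSpan S) (F.orthogonal (ratSpan S)) :=
    (F.isCompl_orthogonal_iff_disjoint hF).mpr (disjoint_ratSpan_orthogonal hB hS)
  obtain ⟨v, hv, w, hw, rfl⟩ := Submodule.mem_sup.mp (hcompl.sup_eq_top ▸ Submodule.mem_top (x := x))
  have hw_perp : ∀ s ∈ S, w ⬝ᵥ (B.map (Int.cast : ℤ → ℚ)) *ᵥ (fun i => (s i : ℚ)) = 0 :=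
    fun s hs => by
      rw [hBq.dotProduct_mulVec_comm, ← toBilin'_apply']
      exact hw _ (Submodule.subset_span ⟨s, hs, rfl⟩)
  have hv_dual : ∀ s ∈ S, ∃ z : ℤ, v ⬝ᵥ (B.map (Int.cast : ℤ → ℚ)) *ᵥ (fun i => (s i : ℚ)) = z :=
    fun s hs => by
      obtain ⟨z, hz⟩ := hx s
      rw [add_dotProduct, hw_perp s hs, add_zero] at hz
      exact ⟨z, hz⟩
  obtain ⟨a, -, ha⟩ := hg_stab v hv hv_dual
  rw [map_add, hg_perp w hw_perp, add_sub_add_right_eq_sub, ha]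
  exact intCast_mem_intVecs a

end

theorem stmt_6_general (n : ℕ) (B : Matrix (Fin n) (Fin n) ℤ)
    (hsymm : B.IsSymm) (hnd : B.det ≠ 0)
    (S : Submodule ℤ (Fin n → ℤ))
    (hSnd : ∀ s ∈ S, (∀ t ∈ S, s ⬝ᵥ B.mulVec t = 0) → s = 0)
    (g : (Fin n → ℚ) →ₗ[ℚ] (Fin n → ℚ))
    (hgiso : ∀ x y : Fin n → ℚ,
      g x ⬝ᵥ (B.map (Int.cast : ℤ → ℚ)).mulVec (g y) = x ⬝ᵥ (B.map (Int.cast : ℤ → ℚ)).mulVec y)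
    (hgperp : ∀ x : Fin n → ℚ,
      (∀ s ∈ S, x ⬝ᵥ (B.map (Int.cast : ℤ → ℚ)).mulVec (fun i => ((s : Fin n → ℤ) i : ℚ)) = 0) →
      g x = x)
    (hgstab : ∀ x : Fin n → ℚ,
      x ∈ Submodule.span ℚ ((fun v : Fin n → ℤ => fun i => (v i : ℚ)) '' (S : Set (Fin n → ℤ))) →
      (∀ s ∈ S, ∃ z : ℤ,
        x ⬝ᵥ (B.map (Int.cast : ℤ → ℚ)).mulVec (fun i => ((s : Fin n → ℤ) i : ℚ)) = z) →
      ∃ a ∈ S, g x - x = fun i => ((a : Fin n → ℤ) i : ℚ)) :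
    (∀ l : Fin n → ℤ, g (fun i => (l i : ℚ)) ∈ intVecs (Fin n)) ∧
    (∀ l : Fin n → ℤ, ∃ l' : Fin n → ℤ, g (fun i => (l' i : ℚ)) = fun i => (l i : ℚ)) ∧
    (∀ x ∈ dualLat B, g x - x ∈ intVecs (Fin n)) := by
  have hdual : ∀ x ∈ dualLat B, g x - x ∈ intVecs (Fin n) :=
    fun x hx => sub_mem_intVecs_of_mem_dualLat hsymm hSnd hgperp hgstab hx
  have hdet : (B.map (Int.cast : ℤ → ℚ)).det ≠ 0 := by
    rw [show (B.map (Int.cast : ℤ → ℚ)).det = (B.det : ℚ) from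
      ((Int.castRingHom ℚ).map_det B).symm]
    exact_mod_cast hnd
  have hsurj : Function.Surjective g :=
    LinearMap.injective_iff_surjective.mp (injective_of_preserves_dotProduct_mulVec hdet hgiso)
  exact ⟨map_intCast_mem_intVecs hdual, exists_intCast_preimage hsurj hgiso hdual, hdual⟩

/-- Let `S` be a (nondegenerate) sublattice of a nondegenerate even lattice
`L = ℤ^n`. Any `g ∈ Õ(S)` — an isometry of `S ⊗ ℚ` extended by the identity on the orthogonal
complement of `S`, preserving `S` and acting trivially on `D(S)` — yields an element of `Õ(L)`:
it preserves `L` (bijectively) and acts trivially on the discriminant group `D(L) = L∨/L`. -/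
theorem stmt_6 (n : ℕ) (B : Matrix (Fin n) (Fin n) ℤ)
    (hsymm : B.IsSymm) (hnd : B.det ≠ 0)
    (heven : ∀ v : Fin n → ℤ, Even (v ⬝ᵥ B.mulVec v))
    (S : Submodule ℤ (Fin n → ℤ))
    (hSnd : ∀ s ∈ S, (∀ t ∈ S, s ⬝ᵥ B.mulVec t = 0) → s = 0)
    (g : (Fin n → ℚ) →ₗ[ℚ] (Fin n → ℚ))
    (hgiso : ∀ x y : Fin n → ℚ,
      g x ⬝ᵥ (B.map (Int.cast : ℤ → ℚ)).mulVec (g y) = x ⬝ᵥ (B.map (Int.cast : ℤ → ℚ)).mulVec y)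
    (hgS : ∀ s ∈ S, ∃ s' ∈ S, g (fun i => ((s : Fin n → ℤ) i : ℚ)) = fun i => ((s' : Fin n → ℤ) i : ℚ))
    (hgSsurj : ∀ s ∈ S, ∃ s' ∈ S, g (fun i => ((s' : Fin n → ℤ) i : ℚ)) = fun i => ((s : Fin n → ℤ) i : ℚ))
    (hgperp : ∀ x : Fin n → ℚ,
      (∀ s ∈ S, x ⬝ᵥ (B.map (Int.cast : ℤ → ℚ)).mulVec (fun i => ((s : Fin n → ℤ) i : ℚ)) = 0) →
      g x = x)
    (hgstab : ∀ x : Fin n → ℚ,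
      x ∈ Submodule.span ℚ ((fun v : Fin n → ℤ => fun i => (v i : ℚ)) '' (S : Set (Fin n → ℤ))) →
      (∀ s ∈ S, ∃ z : ℤ,
        x ⬝ᵥ (B.map (Int.cast : ℤ → ℚ)).mulVec (fun i => ((s : Fin n → ℤ) i : ℚ)) = z) →
      ∃ a ∈ S, g x - x = fun i => ((a : Fin n → ℤ) i : ℚ)) :
    (∀ l : Fin n → ℤ, g (fun i => (l i : ℚ)) ∈ intVecs (Fin n)) ∧
    (∀ l : Fin n → ℤ, ∃ l' : Fin n → ℤ, g (fun i => (l' i : ℚ)) = fun i => (l i : ℚ)) ∧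
    (∀ x ∈ dualLat B, g x - x ∈ intVecs (Fin n)) :=
  stmt_6_general n B hsymm hnd S hSnd g hgiso hgperp hgstab
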